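/- arXiv:0705.1601 — 8 statements merged into one kernel-verified Lean document; each statement's English description precedes it below -/
import Mathlib

section
/- Let n ≥ 3 be an integer, H a real constant, and let (x, y, θ) : I → ℝ³ be a Delaunay generating curve, i.e. a C¹ map on a real interval I with y(t) > 0 for all t, satisfying x' = cos θ, y' = sin θ, θ' = −(n−1)H + (n−2)·cos θ / y. Then the force F(t) = y(t)^{n−2}·(cos θ(t) − H·y(t)) is constant on I. -/
open Real Set

/-- Differentiating `y ^ k * (cos θ - H * y)` along the ODE, the `y ^ (k - 1)` terms coming from
`(y ^ k)' = k y ^ (k - 1) sin θ` and from the `k cos θ / y` part of `θ'` cancel, and so do the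
`H y ^ k sin θ` terms. -/
theorem hasDerivWithinAt_force_eq_zero {y θ : ℝ → ℝ} {s : Set ℝ} {t H : ℝ} (k : ℕ)
    (hyt : y t ≠ 0) (hy : HasDerivWithinAt y (sin (θ t)) s t)
    (hθ : HasDerivWithinAt θ (-((k : ℝ) + 1) * H + k * cos (θ t) / y t) s t) :
    HasDerivWithinAt (fun u => y u ^ k * (cos (θ u) - H * y u)) 0 s t := by
  refine ((hy.fun_pow k).fun_mul (hθ.cos.fun_sub (hy.const_mul H))).congr_deriv ?_
  rcases k with _ | k
  · simp only [Nat.cast_zero]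
    ring
  · simp only [Nat.add_sub_cancel]
    push_cast
    field_simp
    ring

theorem Convex.eq_of_hasDerivWithinAt_zero {𝕜 G : Type*} [RCLike 𝕜] [NormedAddCommGroup G]
    [NormedSpace 𝕜 G] {f : 𝕜 → G} {s : Set 𝕜} (hs : Convex ℝ s)
    (hf : ∀ x ∈ s, HasDerivWithinAt f 0 s x) {x y : 𝕜} (hx : x ∈ s) (hy : y ∈ s) :
    f x = f y := by
  have h := norm_image_sub_le_of_norm_hasDerivWithin_le hf (fun _ _ => norm_zero.le) hs hy hx
  rwa [zero_mul, norm_le_zero_iff, sub_eq_zero] at h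

theorem force_is_constant_general
    (n : ℕ) (hn : 3 ≤ n) (H : ℝ) (I : Set ℝ) (hI : I.OrdConnected)
    (y θ : ℝ → ℝ)
    (hypos : ∀ t ∈ I, 0 < y t)
    (hy : ∀ t ∈ I, HasDerivWithinAt y (Real.sin (θ t)) I t)
    (hθ : ∀ t ∈ I, HasDerivWithinAt θ
      (-((n : ℝ) - 1) * H + ((n : ℝ) - 2) * Real.cos (θ t) / y t) I t) :
    ∀ s ∈ I, ∀ t ∈ I,
      y s ^ (n - 2) * (Real.cos (θ s) - H * y s)
        = y t ^ (n - 2) * (Real.cos (θ t) - H * y t) := by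
  have hcast : ((n - 2 : ℕ) : ℝ) = n - 2 := by
    rw [Nat.cast_sub (by omega)]
    norm_num
  have hforce : ∀ t ∈ I, HasDerivWithinAt
      (fun u => y u ^ (n - 2) * (cos (θ u) - H * y u)) 0 I t := by
    intro t ht
    refine hasDerivWithinAt_force_eq_zero (n - 2) (hypos t ht).ne' (hy t ht)
      ((hθ t ht).congr_deriv ?_)
    rw [hcast]
    ring
  exact fun s hs t ht => hI.convex.eq_of_hasDerivWithinAt_zero hforce hs ht

/-- For a Delaunay generating curve `(x, y, θ)` on an interval `I`
(a C¹ solution of the ODE system `x' = cos θ`, `y' = sin θ`,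
`θ' = -(n-1)H + (n-2) cos θ / y` with `y > 0`), the force
`F(t) = y(t)^(n-2) (cos θ(t) - H y(t))` is constant on `I`. -/
theorem force_is_constant
    (n : ℕ) (hn : 3 ≤ n) (H : ℝ) (I : Set ℝ) (hI : I.OrdConnected)
    (x y θ : ℝ → ℝ)
    (hypos : ∀ t ∈ I, 0 < y t)
    (hx : ∀ t ∈ I, HasDerivWithinAt x (Real.cos (θ t)) I t)
    (hy : ∀ t ∈ I, HasDerivWithinAt y (Real.sin (θ t)) I t)
    (hθ : ∀ t ∈ I, HasDerivWithinAt θ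
      (-((n : ℝ) - 1) * H + ((n : ℝ) - 2) * Real.cos (θ t) / y t) I t) :
    ∀ s ∈ I, ∀ t ∈ I,
      y s ^ (n - 2) * (Real.cos (θ s) - H * y s)
        = y t ^ (n - 2) * (Real.cos (θ t) - H * y t) :=
  force_is_constant_general n hn H I hI y θ hypos hy hθ
end

section
/- Let n ≥ 3 be an integer, H a real constant, and let (x, y, θ) be a Delaunay generating curve on an interval I with constant force F, and suppose cos θ(t) ≠ 0 for all t ∈ I. Define f(t) = x(t) + y(t)·tan θ(t) (the x-axis intercept of the line through (x(t), y(t)) normal to the curve). Then f'(t) = (n−1)·F / (y(t)^{n−2}·cos²θ(t)) for all t ∈ I; in particular, f' has everywhere the same sign as F. -/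
/-!
Since `x' = cos θ` and `y' = sin θ`, the product rule and `sin² + cos² = 1` give
`(x + y tan θ)' = (cos θ + y θ') / cos² θ`. Along a Delaunay curve the numerator is
`(n - 1)(cos θ - H y)`, which the conserved force rewrites as `(n - 1) F / y^(n-2)`.
-/

open Real Set

theorem Real.sign_mul_of_pos {a : ℝ} (ha : 0 < a) (r : ℝ) : Real.sign (a * r) = Real.sign r := by
  rcases lt_trichotomy r 0 with hr | rfl | hr
  · rw [sign_of_neg hr, sign_of_neg (mul_neg_of_pos_of_neg ha hr)]
  · rw [mul_zero]
  · rw [sign_of_pos hr, sign_of_pos (mul_pos ha hr)]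

theorem hasDerivWithinAt_add_mul_tan {x y θ : ℝ → ℝ} {s : Set ℝ} {t θ' : ℝ}
    (hx : HasDerivWithinAt x (cos (θ t)) s t) (hy : HasDerivWithinAt y (sin (θ t)) s t)
    (hθ : HasDerivWithinAt θ θ' s t) (hc : cos (θ t) ≠ 0) :
    HasDerivWithinAt (fun u => x u + y u * tan (θ u))
      ((cos (θ t) + y t * θ') / cos (θ t) ^ 2) s t := by
  have htan := (hasDerivAt_tan hc).comp_hasDerivWithinAt t hθ
  refine (hx.add (hy.mul htan)).congr_deriv ?_
  rw [Function.comp_apply, tan_eq_sin_div_cos]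
  field_simp
  linear_combination cos (θ t) * sin_sq_add_cos_sq (θ t)

theorem delaunay_intercept_numerator (m H c y : ℝ) (hy : y ≠ 0) :
    c + y * (-(m - 1) * H + (m - 2) * c / y) = (m - 1) * (c - H * y) := by
  field_simp
  ring

theorem normal_intercept_derivative_general
    (n : ℕ) (hn : 3 ≤ n) (H F : ℝ) (I : Set ℝ)
    (x y θ : ℝ → ℝ)
    (hypos : ∀ t ∈ I, 0 < y t)
    (hx : ∀ t ∈ I, HasDerivWithinAt x (Real.cos (θ t)) I t)
    (hy : ∀ t ∈ I, HasDerivWithinAt y (Real.sin (θ t)) I t)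
    (hθ : ∀ t ∈ I, HasDerivWithinAt θ
      (-((n : ℝ) - 1) * H + ((n : ℝ) - 2) * Real.cos (θ t) / y t) I t)
    (hF : ∀ t ∈ I, y t ^ (n - 2) * (Real.cos (θ t) - H * y t) = F)
    (hcos : ∀ t ∈ I, Real.cos (θ t) ≠ 0) :
    (∀ t ∈ I, HasDerivWithinAt (fun s => x s + y s * Real.tan (θ s))
      (((n : ℝ) - 1) * F / (y t ^ (n - 2) * Real.cos (θ t) ^ 2)) I t) ∧
    (∀ t ∈ I,
      Real.sign (((n : ℝ) - 1) * F / (y t ^ (n - 2) * Real.cos (θ t) ^ 2))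
        = Real.sign F) := by
  refine ⟨fun t ht => ?_, fun t ht => ?_⟩
  · have hpow : y t ^ (n - 2) ≠ 0 := pow_ne_zero _ (hypos t ht).ne'
    convert hasDerivWithinAt_add_mul_tan (hx t ht) (hy t ht) (hθ t ht) (hcos t ht) using 1
    rw [delaunay_intercept_numerator _ H _ _ (hypos t ht).ne', ← hF t ht]
    field_simp
  · have hn1 : (0 : ℝ) < (n : ℝ) - 1 := by
      have : (3 : ℝ) ≤ n := by exact_mod_cast hn
      linarith
    have hden : 0 < y t ^ (n - 2) * cos (θ t) ^ 2 :=
      mul_pos (pow_pos (hypos t ht) _) (pow_pos (abs_pos.mpr (hcos t ht)) 2 |>.trans_eq (sq_abs _))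
    rw [mul_div_right_comm]
    exact Real.sign_mul_of_pos (div_pos hn1 hden) F

/-- For a Delaunay generating curve `(x, y, θ)` on an interval `I`
with constant force `F` and `cos θ` nonvanishing on `I`, the x-axis intercept
`f(t) = x(t) + y(t) tan θ(t)` of the normal line satisfies
`f'(t) = (n-1) F / (y(t)^(n-2) cos²θ(t))`; in particular `f'` has everywhere
the same sign as `F`. -/
theorem normal_intercept_derivative
    (n : ℕ) (hn : 3 ≤ n) (H F : ℝ) (I : Set ℝ) (hI : I.OrdConnected)
    (x y θ : ℝ → ℝ)
    (hypos : ∀ t ∈ I, 0 < y t)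
    (hx : ∀ t ∈ I, HasDerivWithinAt x (Real.cos (θ t)) I t)
    (hy : ∀ t ∈ I, HasDerivWithinAt y (Real.sin (θ t)) I t)
    (hθ : ∀ t ∈ I, HasDerivWithinAt θ
      (-((n : ℝ) - 1) * H + ((n : ℝ) - 2) * Real.cos (θ t) / y t) I t)
    (hF : ∀ t ∈ I, y t ^ (n - 2) * (Real.cos (θ t) - H * y t) = F)
    (hcos : ∀ t ∈ I, Real.cos (θ t) ≠ 0) :
    (∀ t ∈ I, HasDerivWithinAt (fun s => x s + y s * Real.tan (θ s))
      (((n : ℝ) - 1) * F / (y t ^ (n - 2) * Real.cos (θ t) ^ 2)) I t) ∧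
    (∀ t ∈ I,
      Real.sign (((n : ℝ) - 1) * F / (y t ^ (n - 2) * Real.cos (θ t) ^ 2))
        = Real.sign F) :=
  normal_intercept_derivative_general n hn H F I x y θ hypos hx hy hθ hF hcos
end

section
/- Let n ≥ 3 be an integer, H a real constant, and let (x, y, θ) be a Delaunay generating curve on an interval I with constant force F. If H·F < 0, then H·θ'(t) < 0 for every t ∈ I; in particular the planar curvature −θ' never vanishes, so the generating curve is locally convex (this is the nodoid case of the Delaunay classification). -/
/-! Multiplying `θ'` by `y > 0` gives
`y · H θ' = -H² y + (n - 2) · H (cos θ - H y)`,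
and `H (cos θ - H y)` has the sign of `H F < 0` because `F = y^(n-2) (cos θ - H y)` with
`y^(n-2) > 0`. Both terms are then negative, the first because `H ≠ 0`. -/

lemma mul_sub_neg_of_mul_force_neg {n : ℕ} {H F c y : ℝ} (hy : 0 < y)
    (hF : y ^ n * (c - H * y) = F) (hHF : H * F < 0) : H * (c - H * y) < 0 := by
  rw [← hF, mul_left_comm] at hHF
  exact neg_of_mul_neg_right hHF (pow_pos hy n).le

lemma mul_delaunay_angle_deriv_neg {m H c y : ℝ} (hm : 2 ≤ m) (hy : 0 < y)
    (hsign : H * (c - H * y) < 0) : H * (-(m - 1) * H + (m - 2) * c / y) < 0 := by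
  have hH : H ≠ 0 := left_ne_zero_of_mul hsign.ne
  have hexpand : H * (-(m - 1) * H + (m - 2) * c / y)
      = (-H ^ 2 * y + (m - 2) * (H * (c - H * y))) / y := by
    field_simp
    ring
  rw [hexpand]
  apply div_neg_of_neg_of_pos _ hy
  have hsq : 0 < H ^ 2 * y := mul_pos (sq_pos_of_ne_zero hH) hy
  have hforce : (m - 2) * (H * (c - H * y)) ≤ 0 :=
    mul_nonpos_of_nonneg_of_nonpos (sub_nonneg.mpr hm) hsign.le
  linarith

theorem nodoid_locally_convex_general
    (n : ℕ) (hn : 3 ≤ n) (H F : ℝ) (I : Set ℝ) (y θ : ℝ → ℝ)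
    (hypos : ∀ t ∈ I, 0 < y t)
    (hF : ∀ t ∈ I, y t ^ (n - 2) * (Real.cos (θ t) - H * y t) = F)
    (hHF : H * F < 0) :
    ∀ t ∈ I,
      H * (-((n : ℝ) - 1) * H + ((n : ℝ) - 2) * Real.cos (θ t) / y t) < 0 ∧
      -(-((n : ℝ) - 1) * H + ((n : ℝ) - 2) * Real.cos (θ t) / y t) ≠ 0 := by
  intro t ht
  have hm : (2 : ℝ) ≤ n := by exact_mod_cast (by omega : 2 ≤ n)
  have hneg := mul_delaunay_angle_deriv_neg hm (hypos t ht)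
    (mul_sub_neg_of_mul_force_neg (hypos t ht) (hF t ht) hHF)
  exact ⟨hneg, neg_ne_zero.mpr (right_ne_zero_of_mul hneg.ne)⟩

/-- For a Delaunay generating curve `(x, y, θ)` on an interval `I`
with constant force `F`, if `H F < 0` then `H θ'(t) < 0` for every `t ∈ I`;
in particular the planar curvature `-θ'` never vanishes, so the generating
curve is locally convex (the nodoid case). -/
theorem nodoid_locally_convex
    (n : ℕ) (hn : 3 ≤ n) (H F : ℝ) (I : Set ℝ) (hI : I.OrdConnected)
    (x y θ : ℝ → ℝ)
    (hypos : ∀ t ∈ I, 0 < y t)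
    (hx : ∀ t ∈ I, HasDerivWithinAt x (Real.cos (θ t)) I t)
    (hy : ∀ t ∈ I, HasDerivWithinAt y (Real.sin (θ t)) I t)
    (hθ : ∀ t ∈ I, HasDerivWithinAt θ
      (-((n : ℝ) - 1) * H + ((n : ℝ) - 2) * Real.cos (θ t) / y t) I t)
    (hF : ∀ t ∈ I, y t ^ (n - 2) * (Real.cos (θ t) - H * y t) = F)
    (hHF : H * F < 0) :
    ∀ t ∈ I,
      H * (-((n : ℝ) - 1) * H + ((n : ℝ) - 2) * Real.cos (θ t) / y t) < 0 ∧
      -(-((n : ℝ) - 1) * H + ((n : ℝ) - 2) * Real.cos (θ t) / y t) ≠ 0 :=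
  nodoid_locally_convex_general n hn H F I y θ hypos hF hHF
end

section
/- Let n ≥ 3 be an integer, H a real constant, and let (x, y, θ) be a Delaunay generating curve on an interval I with constant force F. If H > 0 and F > 0, then cos θ(t) > 0 and y(t) < 1/H for all t ∈ I; in particular the generating curve is a graph over the x-axis (this is the unduloid case of the Delaunay classification). -/
open Real Set

/-- For a Delaunay generating curve `(x, y, θ)` on an interval `I`
with constant force `F`, if `H > 0` and `F > 0` then `cos θ(t) > 0` and
`y(t) < 1/H` on `I`; in particular the generating curve is a graph over the
axis (the unduloid case). -/
theorem unduloid_is_graph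
    (n : ℕ) (hn : 3 ≤ n) (H F : ℝ) (I : Set ℝ) (hI : I.OrdConnected)
    (x y θ : ℝ → ℝ)
    (hypos : ∀ t ∈ I, 0 < y t)
    (hx : ∀ t ∈ I, HasDerivWithinAt x (Real.cos (θ t)) I t)
    (hy : ∀ t ∈ I, HasDerivWithinAt y (Real.sin (θ t)) I t)
    (hθ : ∀ t ∈ I, HasDerivWithinAt θ
      (-((n : ℝ) - 1) * H + ((n : ℝ) - 2) * Real.cos (θ t) / y t) I t)
    (hF : ∀ t ∈ I, y t ^ (n - 2) * (Real.cos (θ t) - H * y t) = F)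
    (hH : 0 < H) (hFpos : 0 < F) :
    ∀ t ∈ I, 0 < Real.cos (θ t) ∧ y t < 1 / H := by
  intro t ht
  have hyt := hypos t ht
  have hpow : 0 < y t ^ (n - 2) := pow_pos hyt _
  have hFt := hF t ht
  have hdiff : 0 < Real.cos (θ t) - H * y t := by
    by_contra h
    push_neg at h
    nlinarith
  have hcos : 0 < Real.cos (θ t) := by nlinarith
  refine ⟨hcos, ?_⟩
  rw [lt_div_iff₀ hH]
  nlinarith [Real.cos_le_one (θ t)]
end

section
/- Let n ≥ 3 be an integer, H a nonzero real constant, and let (x, y, θ) be a Delaunay generating curve on an interval I whose force F vanishes identically. Then θ'(t) = −H for all t ∈ I, and there is a real constant c such that (x(t) − c)² + y(t)² = 1/H² for all t ∈ I; i.e., the generating curve is an arc of a circle of radius 1/|H| centered at the point (c, 0) on the axis (this is the sphere case of the Delaunay classification). -/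
open Real Set

/-!
Vanishing force means `cos θ = H y`. Substituting this into the equation for `θ'` gives
`θ' = -H`, so `x + sin θ / H` has derivative `cos θ - cos θ = 0` and equals a constant `c`.
Then `x - c = -sin θ / H` and `y = cos θ / H`, which lie on the circle of radius `1 / |H|`.
-/

theorem Convex.eq_of_hasDerivWithinAt_zero_s5 {E : Type*} [NormedAddCommGroup E] [NormedSpace ℝ E]
    {f : ℝ → E} {s : Set ℝ} (hs : Convex ℝ s) (hf : ∀ t ∈ s, HasDerivWithinAt f 0 s t)
    {a b : ℝ} (ha : a ∈ s) (hb : b ∈ s) : f a = f b := by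
  have h := hs.norm_image_sub_le_of_norm_hasDerivWithin_le (C := 0) hf (fun _ _ => by simp) hb ha
  simpa [sub_eq_zero] using h

theorem eq_mul_of_pow_mul_sub_eq_zero {y c H : ℝ} (hy : 0 < y) (k : ℕ)
    (h : y ^ k * (c - H * y) = 0) : c = H * y :=
  sub_eq_zero.mp ((mul_eq_zero.mp h).resolve_left (pow_pos hy k).ne')

theorem delaunay_angle_rate_of_cos_eq {m H y φ : ℝ} (hy : y ≠ 0) (hcos : cos φ = H * y) :
    -(m - 1) * H + (m - 2) * cos φ / y = -H := by
  rw [hcos]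
  field_simp
  ring

theorem hasDerivWithinAt_add_sin_div_zero {x θ : ℝ → ℝ} {H t : ℝ} {s : Set ℝ} (hH : H ≠ 0)
    (hx : HasDerivWithinAt x (cos (θ t)) s t) (hθ : HasDerivWithinAt θ (-H) s t) :
    HasDerivWithinAt (fun t => x t + sin (θ t) / H) 0 s t := by
  have hsin := ((hasDerivAt_sin (θ t)).comp_hasDerivWithinAt t hθ).div_const H
  refine (hx.add hsin).congr_deriv ?_
  field_simp
  ring

theorem sin_div_sq_add_sq_of_cos_eq {H y φ : ℝ} (hH : H ≠ 0) (hcos : cos φ = H * y) :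
    (sin φ / H) ^ 2 + y ^ 2 = 1 / H ^ 2 := by
  have hy : y = cos φ / H := by rw [hcos]; field_simp
  rw [hy, div_pow, div_pow, ← add_div, sin_sq_add_cos_sq]

theorem sphere_case_general
    (n : ℕ) (H : ℝ) (hH : H ≠ 0) (I : Set ℝ) (hI : I.OrdConnected)
    (x y θ : ℝ → ℝ)
    (hypos : ∀ t ∈ I, 0 < y t)
    (hx : ∀ t ∈ I, HasDerivWithinAt x (Real.cos (θ t)) I t)
    (hθ : ∀ t ∈ I, HasDerivWithinAt θ
      (-((n : ℝ) - 1) * H + ((n : ℝ) - 2) * Real.cos (θ t) / y t) I t)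
    (hF : ∀ t ∈ I, y t ^ (n - 2) * (Real.cos (θ t) - H * y t) = 0) :
    (∀ t ∈ I, HasDerivWithinAt θ (-H) I t) ∧
    ∃ c : ℝ, ∀ t ∈ I, (x t - c) ^ 2 + y t ^ 2 = 1 / H ^ 2 := by
  have hcos : ∀ t ∈ I, cos (θ t) = H * y t := fun t ht =>
    eq_mul_of_pow_mul_sub_eq_zero (hypos t ht) _ (hF t ht)
  have hθ' : ∀ t ∈ I, HasDerivWithinAt θ (-H) I t := fun t ht =>
    (hθ t ht).congr_deriv (delaunay_angle_rate_of_cos_eq (hypos t ht).ne' (hcos t ht))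
  refine ⟨hθ', ?_⟩
  obtain rfl | ⟨t₀, ht₀⟩ := I.eq_empty_or_nonempty
  · exact ⟨0, by simp⟩
  refine ⟨x t₀ + sin (θ t₀) / H, fun t ht => ?_⟩
  have hconst : x t + sin (θ t) / H = x t₀ + sin (θ t₀) / H :=
    hI.convex.eq_of_hasDerivWithinAt_zero_s5
      (fun s hs => hasDerivWithinAt_add_sin_div_zero hH (hx s hs) (hθ' s hs)) ht ht₀
  rw [← hconst, sub_add_cancel_left, neg_sq]
  exact sin_div_sq_add_sq_of_cos_eq hH (hcos t ht)

/-- For a Delaunay generating curve `(x, y, θ)` on an interval `I`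
with `H ≠ 0` and identically vanishing force, we have `θ'(t) = -H` on `I` and
there is `c : ℝ` with `(x(t) - c)² + y(t)² = 1/H²` on `I`: the generating curve
is an arc of a circle of radius `1/|H|` centered on the axis (the sphere case). -/
theorem sphere_case
    (n : ℕ) (hn : 3 ≤ n) (H : ℝ) (hH : H ≠ 0) (I : Set ℝ) (hI : I.OrdConnected)
    (x y θ : ℝ → ℝ)
    (hypos : ∀ t ∈ I, 0 < y t)
    (hx : ∀ t ∈ I, HasDerivWithinAt x (Real.cos (θ t)) I t)
    (hy : ∀ t ∈ I, HasDerivWithinAt y (Real.sin (θ t)) I t)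
    (hθ : ∀ t ∈ I, HasDerivWithinAt θ
      (-((n : ℝ) - 1) * H + ((n : ℝ) - 2) * Real.cos (θ t) / y t) I t)
    (hF : ∀ t ∈ I, y t ^ (n - 2) * (Real.cos (θ t) - H * y t) = 0) :
    (∀ t ∈ I, HasDerivWithinAt θ (-H) I t) ∧
    ∃ c : ℝ, ∀ t ∈ I, (x t - c) ^ 2 + y t ^ 2 = 1 / H ^ 2 :=
  sphere_case_general n H hH I hI x y θ hypos hx hθ hF
end

section
/- Let Δt > 0 and let θ : [0, Δt] → ℝ be a C² function with θ''(t) < 0 for all t, θ(0) = 0, θ(Δt) = θ_q where 0 ≤ θ_q ≤ π/3, and θ(t) ∈ [0, θ_q] for all t ∈ [0, Δt]. Let x(t) = ∫₀ᵗ cos θ(s) ds and y(t) = ∫₀ᵗ sin θ(s) ds be the associated unit-speed planar curve. Then for every t ∈ [0, Δt), y(t) < y(Δt) + tan(θ_q − π/6)·(x(t) − x(Δt)); i.e., the line through the endpoint (x(Δt), y(Δt)) at angle θ_q − π/6 above the horizontal (π/6 clockwise from the curve's final tangent) passes strictly above the rest of the curve. -/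
/-! On `[t, Δt]` the strictly concave `θ` lies strictly above its chord `ℓ`, and both take values
in `[0, θ_q]`, where `u ↦ sin (u - φ)` with `φ = θ_q - π/6` is increasing. Hence
`∫ₜ^Δt sin (θ - φ) > ∫ₜ^Δt sin (ℓ - φ) = (cos (θ t - φ) - cos (π/6)) / ℓ' ≥ 0`, because
`|θ t - φ| ≤ π/6`. Finally `∫ₜ^Δt sin (θ - φ) = cos φ · (y Δt - y t) - sin φ · (x Δt - x t)` and
`cos φ > 0`. -/

open Real Set intervalIntegral

theorem strictConcaveOn_of_hasDerivWithinAt2_neg {D : Set ℝ} (hD : Convex ℝ D)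
    {f f' f'' : ℝ → ℝ} (hf : ∀ x ∈ D, HasDerivWithinAt f (f' x) D x)
    (hf' : ∀ x ∈ D, HasDerivWithinAt f' (f'' x) D x) (hf'' : ∀ x ∈ interior D, f'' x < 0) :
    StrictConcaveOn ℝ D f := by
  have hderiv : EqOn (deriv f) f' (interior D) := fun x hx =>
    ((hf x (interior_subset hx)).hasDerivAt (mem_interior_iff_mem_nhds.mp hx)).deriv
  have hanti : StrictAntiOn f' (interior D) := by
    refine strictAntiOn_of_hasDerivWithinAt_neg hD.interior
      (fun x hx => (hf' x (interior_subset hx)).continuousWithinAt.mono interior_subset)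
      (fun x hx => ?_) (fun x hx => hf'' x (interior_subset hx))
    rw [interior_interior] at hx ⊢
    exact (hf' x (interior_subset hx)).mono interior_subset
  exact StrictAntiOn.strictConcaveOn_of_deriv hD (fun x hx => (hf x hx).continuousWithinAt)
    (hanti.congr hderiv.symm)

theorem StrictConcaveOn.add_secant_mul_lt {f : ℝ → ℝ} {a b s : ℝ}
    (hf : StrictConcaveOn ℝ (Icc a b) f) (hs : s ∈ Ioo a b) :
    f a + (f b - f a) / (b - a) * (s - a) < f s := by
  have hslope := hf.secant_strict_mono (left_mem_Icc.2 (hs.1.trans hs.2).le)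
    (Ioo_subset_Icc_self hs) (right_mem_Icc.2 (hs.1.trans hs.2).le) hs.1.ne' (hs.1.trans hs.2).ne'
    hs.2
  rw [lt_div_iff₀ (sub_pos.2 hs.1)] at hslope
  linarith

theorem integral_sin_add_mul_sub {a b c k : ℝ} (hk : k ≠ 0) :
    ∫ s in a..b, sin (c + k * (s - a)) = (cos c - cos (c + k * (b - a))) / k := by
  have hlin : ∀ s, c + k * (s - a) = k * s + (c - k * a) := fun s => by ring
  simp_rw [hlin, integral_comp_mul_add (fun x => sin x) hk, integral_sin, smul_eq_mul]
  rw [show k * a + (c - k * a) = c by ring, show k * b + (c - k * a) = c + k * (b - a) by ring,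
    div_eq_inv_mul]

theorem integral_sin_add_mul_sub_nonneg {a b c k : ℝ} (hk : 0 < k)
    (hc : |c| ≤ c + k * (b - a)) (hπ : c + k * (b - a) ≤ π) :
    0 ≤ ∫ s in a..b, sin (c + k * (s - a)) := by
  rw [integral_sin_add_mul_sub hk.ne']
  refine div_nonneg (sub_nonneg.2 ?_) hk.le
  rw [← cos_abs c]
  exact cos_le_cos_of_nonneg_of_le_pi (abs_nonneg c) hπ hc

theorem integral_sin_sub_eq {g : ℝ → ℝ} {a b : ℝ} (hg : ContinuousOn g (uIcc a b)) (φ : ℝ) :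
    ∫ s in a..b, sin (g s - φ) =
      (∫ s in a..b, sin (g s)) * cos φ - (∫ s in a..b, cos (g s)) * sin φ := by
  simp_rw [sin_sub]
  rw [integral_sub, integral_mul_const, integral_mul_const]
  · exact ((continuous_sin.comp_continuousOn hg).mul continuousOn_const).intervalIntegrable
  · exact ((continuous_cos.comp_continuousOn hg).mul continuousOn_const).intervalIntegrable

theorem integral_sub_integral_of_continuousOn {g : ℝ → ℝ} {a b c : ℝ}
    (hg : ContinuousOn g (Icc a b)) (hc : c ∈ Icc a b) :
    (∫ s in a..b, g s) - ∫ s in a..c, g s = ∫ s in c..b, g s :=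
  integral_interval_sub_left (hg.intervalIntegrable_of_Icc (hc.1.trans hc.2))
    ((hg.mono (Icc_subset_Icc_right hc.2)).intervalIntegrable_of_Icc hc.1)

theorem integral_sin_sub_pos_of_strictConcaveOn {f : ℝ → ℝ} {a b : ℝ} (hab : a < b)
    (hf : StrictConcaveOn ℝ (Icc a b) f) (hfc : ContinuousOn f (Icc a b))
    (hrange : ∀ s ∈ Icc a b, f s ∈ Icc 0 (f b)) (hb : f b ≤ π / 3) :
    0 < ∫ s in a..b, sin (f s - (f b - π / 6)) := by
  set φ := f b - π / 6 with hφ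
  set k := (f b - f a) / (b - a)
  have hkb : k * (b - a) = f b - f a := by simp only [k]; field_simp [(sub_pos.2 hab).ne']
  have hchord : ∀ s ∈ Ioo a b, f a + k * (s - a) < f s := fun s hs => hf.add_secant_mul_lt hs
  have hchord_le : ∀ s ∈ Ioc a b, f a + k * (s - a) ≤ f s := by
    rintro s ⟨has, hsb⟩
    rcases hsb.lt_or_eq with hsb | rfl
    · exact (hchord s ⟨has, hsb⟩).le
    · linarith
  have hm : (a + b) / 2 ∈ Ioo a b := ⟨by linarith, by linarith⟩
  have hfa := hrange a (left_mem_Icc.2 hab.le)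
  have hk : 0 < k := by
    -- at the midpoint `m`, `(f a + f b) / 2 < f m ≤ f b`
    have hfm := (hrange _ (Ioo_subset_Icc_self hm)).2
    have hm_chord := hchord _ hm
    have hhalf : k * ((a + b) / 2 - a) = (f b - f a) / 2 := by linear_combination hkb / 2
    exact div_pos (by linarith) (sub_pos.2 hab)
  have hsin : ∀ u ∈ Icc 0 (f b), u - φ ∈ Icc (-(π / 2)) (π / 2) := fun u hu =>
    ⟨by linarith [hu.1, pi_pos], by linarith [hu.2, pi_pos]⟩
  have hchord_mem : ∀ s ∈ Icc a b, f a + k * (s - a) ∈ Icc 0 (f b) := fun s hs =>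
    ⟨by nlinarith [hs.1, hfa.1], by nlinarith [hs.2]⟩
  have hlower : 0 ≤ ∫ s in a..b, sin (f a - φ + k * (s - a)) :=
    integral_sin_add_mul_sub_nonneg hk
      (abs_le.2 ⟨by linarith [hfa.1], by linarith [hfa.2]⟩) (by linarith [pi_pos])
  simp_rw [sub_add_eq_add_sub] at hlower
  refine hlower.trans_lt (integral_lt_integral_of_continuousOn_of_le_of_exists_lt hab
    (by fun_prop) (continuous_sin.comp_continuousOn (hfc.sub continuousOn_const))
    (fun s hs => ?_) ⟨(a + b) / 2, Ioo_subset_Icc_self hm, ?_⟩)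
  · exact strictMonoOn_sin.monotoneOn (hsin _ (hchord_mem s (Ioc_subset_Icc_self hs)))
      (hsin _ (hrange s (Ioc_subset_Icc_self hs))) (by linarith [hchord_le s hs])
  · exact strictMonoOn_sin (hsin _ (hchord_mem _ (Ioo_subset_Icc_self hm)))
      (hsin _ (hrange _ (Ioo_subset_Icc_self hm))) (by linarith [hchord _ hm])

theorem line_above_concave_curve_general
    (Δt θq : ℝ) (θ θ' θ'' : ℝ → ℝ)
    (hd1 : ∀ t ∈ Set.Icc 0 Δt, HasDerivWithinAt θ (θ' t) (Set.Icc 0 Δt) t)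
    (hd2 : ∀ t ∈ Set.Icc 0 Δt, HasDerivWithinAt θ' (θ'' t) (Set.Icc 0 Δt) t)
    (hconc : ∀ t ∈ Set.Icc 0 Δt, θ'' t < 0)
    (hq : θ Δt = θq) (hθq : 0 ≤ θq ∧ θq ≤ π / 3)
    (hrange : ∀ t ∈ Set.Icc 0 Δt, θ t ∈ Set.Icc 0 θq)
    (x y : ℝ → ℝ)
    (hx : ∀ t, x t = ∫ s in (0 : ℝ)..t, Real.cos (θ s))
    (hy : ∀ t, y t = ∫ s in (0 : ℝ)..t, Real.sin (θ s)) :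
    ∀ t ∈ Set.Ico 0 Δt,
      y t < y Δt + Real.tan (θq - π / 6) * (x t - x Δt) := by
  intro t ht
  subst hq
  have hθ : StrictConcaveOn ℝ (Icc 0 Δt) θ := strictConcaveOn_of_hasDerivWithinAt2_neg
    (convex_Icc 0 Δt) hd1 hd2 fun s hs => hconc s (interior_subset hs)
  have hθc : ContinuousOn θ (Icc 0 Δt) := fun s hs => (hd1 s hs).continuousWithinAt
  have hsub : Icc t Δt ⊆ Icc 0 Δt := Icc_subset_Icc_left ht.1
  have hpos := integral_sin_sub_pos_of_strictConcaveOn ht.2 (hθ.subset hsub (convex_Icc t Δt))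
    (hθc.mono hsub) (fun s hs => hrange s (hsub hs)) hθq.2
  have ht' : t ∈ Icc 0 Δt := Ico_subset_Icc_self ht
  have hΔy : y Δt - y t = ∫ s in t..Δt, sin (θ s) := by
    rw [hy, hy]
    exact integral_sub_integral_of_continuousOn (continuous_sin.comp_continuousOn hθc) ht'
  have hΔx : x Δt - x t = ∫ s in t..Δt, cos (θ s) := by
    rw [hx, hx]
    exact integral_sub_integral_of_continuousOn (continuous_cos.comp_continuousOn hθc) ht'
  set φ := θ Δt - π / 6 with hφ
  rw [integral_sin_sub_eq (by rw [uIcc_of_le ht.2.le]; exact hθc.mono hsub), ← hΔy, ← hΔx]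
    at hpos
  have hcos : 0 < cos φ :=
    cos_pos_of_mem_Ioo ⟨by linarith [pi_pos, hθq.1], by linarith [pi_pos, hθq.2]⟩
  have hquot : y Δt - y t + tan φ * (x t - x Δt) =
      ((y Δt - y t) * cos φ - (x Δt - x t) * sin φ) / cos φ := by
    rw [tan_eq_sin_div_cos]; field_simp; ring
  linarith [div_pos hpos hcos]

/-- For a C² angle function `θ` on `[0, Δt]` with `θ'' < 0`,
`θ(0) = 0`, `θ(Δt) = θ_q ∈ [0, π/3]` and `θ` taking values in `[0, θ_q]`, the
line through the endpoint of the associated unit-speed curve at angle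
`θ_q - π/6` above the horizontal passes strictly above the rest of the curve. -/
theorem line_above_concave_curve
    (Δt θq : ℝ) (hΔt : 0 < Δt) (θ θ' θ'' : ℝ → ℝ)
    (hd1 : ∀ t ∈ Set.Icc 0 Δt, HasDerivWithinAt θ (θ' t) (Set.Icc 0 Δt) t)
    (hd2 : ∀ t ∈ Set.Icc 0 Δt, HasDerivWithinAt θ' (θ'' t) (Set.Icc 0 Δt) t)
    (hcont : ContinuousOn θ'' (Set.Icc 0 Δt))
    (hconc : ∀ t ∈ Set.Icc 0 Δt, θ'' t < 0)
    (h0 : θ 0 = 0) (hq : θ Δt = θq) (hθq : 0 ≤ θq ∧ θq ≤ π / 3)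
    (hrange : ∀ t ∈ Set.Icc 0 Δt, θ t ∈ Set.Icc 0 θq)
    (x y : ℝ → ℝ)
    (hx : ∀ t, x t = ∫ s in (0 : ℝ)..t, Real.cos (θ s))
    (hy : ∀ t, y t = ∫ s in (0 : ℝ)..t, Real.sin (θ s)) :
    ∀ t ∈ Set.Ico 0 Δt,
      y t < y Δt + Real.tan (θq - π / 6) * (x t - x Δt) :=
  line_above_concave_curve_general Δt θq θ θ' θ'' hd1 hd2 hconc hq hθq hrange x y hx hy
end

section
/- Let Δt > 0 and let θ : [0, Δt] → ℝ be a C² function with θ''(t) < 0 for all t, θ(0) = 0, θ(Δt) = θ_q where θ_q ∈ (0, π/2], and θ(t) ∈ [0, θ_q] for all t ∈ [0, Δt]. Then ∫₀^{Δt} sin θ(t) dt > Δt·(1 − cos θ_q)/θ_q. -/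
/-!
Strict concavity of `θ` with `θ 0 = 0` puts its graph strictly above the chord `t ↦ t θ_q / Δt`
on `(0, Δt)`. Both angles lie in `[0, π/2]`, where `sin` is strictly increasing, so
`sin θ(t) > sin (t θ_q / Δt)` there, and the latter integrates to `Δt (1 - cos θ_q) / θ_q`.
-/

open Real Set intervalIntegral

theorem strictConcaveOn_Icc_of_hasDerivWithinAt_of_hasDerivAt {f f' f'' : ℝ → ℝ} {a b : ℝ}
    (hf : ∀ t ∈ Icc a b, HasDerivWithinAt f (f' t) (Icc a b) t)
    (hf' : ∀ t ∈ Ioo a b, HasDerivAt f' (f'' t) t) (hf'' : ∀ t ∈ Ioo a b, f'' t < 0) :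
    StrictConcaveOn ℝ (Icc a b) f := by
  refine strictConcaveOn_of_deriv2_neg (convex_Icc a b)
    (fun t ht => (hf t ht).continuousWithinAt) fun t ht => ?_
  rw [interior_Icc] at ht
  have hderiv : deriv f =ᶠ[nhds t] f' := by
    filter_upwards [isOpen_Ioo.mem_nhds ht] with s hs
    exact ((hf s (Ioo_subset_Icc_self hs)).hasDerivAt (Icc_mem_nhds hs.1 hs.2)).deriv
  rw [Function.iterate_succ_apply, Function.iterate_one, hderiv.deriv_eq, (hf' t ht).deriv]
  exact hf'' t ht

theorem StrictConcaveOn.mul_div_lt_of_map_zero {f : ℝ → ℝ} {T t : ℝ}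
    (hf : StrictConcaveOn ℝ (Icc 0 T) f) (h0 : f 0 = 0) (ht : t ∈ Ioo 0 T) :
    t * f T / T < f t := by
  have hT : 0 < T := ht.1.trans ht.2
  have hslope := hf.secant_strict_mono (left_mem_Icc.2 hT.le) (Ioo_subset_Icc_self ht)
    (right_mem_Icc.2 hT.le) ht.1.ne' hT.ne' ht.2
  rw [h0, sub_zero, sub_zero, sub_zero, sub_zero, div_lt_div_iff₀ hT ht.1] at hslope
  rw [div_lt_iff₀ hT]
  linarith

theorem integral_sin_mul_div {T c : ℝ} (hT : T ≠ 0) (hc : c ≠ 0) :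
    ∫ t in (0 : ℝ)..T, sin (t * c / T) = T * (1 - cos c) / c := by
  simp_rw [mul_div_assoc]
  rw [integral_comp_mul_right (fun t => sin t) (div_ne_zero hc hT), integral_sin, zero_mul,
    cos_zero, mul_div_cancel₀ c hT, smul_eq_mul, inv_div]
  ring

theorem rise_lower_bound_general
    (Δt θq : ℝ) (hΔt : 0 < Δt) (θ θ' θ'' : ℝ → ℝ)
    (hd1 : ∀ t ∈ Set.Icc 0 Δt, HasDerivWithinAt θ (θ' t) (Set.Icc 0 Δt) t)
    (hd2 : ∀ t ∈ Set.Icc 0 Δt, HasDerivWithinAt θ' (θ'' t) (Set.Icc 0 Δt) t)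
    (hconc : ∀ t ∈ Set.Icc 0 Δt, θ'' t < 0)
    (h0 : θ 0 = 0) (hq : θ Δt = θq) (hθq : 0 < θq ∧ θq ≤ π / 2)
    (hrange : ∀ t ∈ Set.Icc 0 Δt, θ t ∈ Set.Icc 0 θq) :
    (∫ t in (0 : ℝ)..Δt, Real.sin (θ t)) > Δt * (1 - Real.cos θq) / θq := by
  obtain ⟨hθq, hθqπ⟩ := hθq
  have hconcave : StrictConcaveOn ℝ (Icc 0 Δt) θ :=
    strictConcaveOn_Icc_of_hasDerivWithinAt_of_hasDerivAt hd1
      (fun t ht => (hd2 t (Ioo_subset_Icc_self ht)).hasDerivAt (Icc_mem_nhds ht.1 ht.2))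
      (fun t ht => hconc t (Ioo_subset_Icc_self ht))
  have hsin_lt : ∀ t ∈ Ioo 0 Δt, sin (t * θq / Δt) < sin (θ t) := by
    intro t ht
    have hchord := hconcave.mul_div_lt_of_map_zero h0 ht
    rw [hq] at hchord
    have hchord_nonneg : 0 ≤ t * θq / Δt := by have := ht.1; positivity
    exact sin_lt_sin_of_lt_of_le_pi_div_two (by linarith [pi_pos])
      ((hrange t (Ioo_subset_Icc_self ht)).2.trans hθqπ) hchord
  rw [gt_iff_lt, ← integral_sin_mul_div hΔt.ne' hθq.ne']
  refine integral_lt_integral_of_continuousOn_of_le_of_exists_lt hΔt (by fun_prop)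
    (continuous_sin.comp_continuousOn fun t ht => (hd1 t ht).continuousWithinAt)
    (fun t ht => ?_) ⟨Δt / 2, ⟨by linarith, by linarith⟩, hsin_lt _ ⟨by linarith, by linarith⟩⟩
  rcases ht.2.lt_or_eq with hlt | rfl
  · exact (hsin_lt t ⟨ht.1, hlt⟩).le
  · rw [hq, mul_div_cancel_left₀ θq hΔt.ne']

/-- For a C² angle function `θ` on `[0, Δt]` with `θ'' < 0`,
`θ(0) = 0`, `θ(Δt) = θ_q ∈ (0, π/2]` and `θ` taking values in `[0, θ_q]`,
the total rise satisfies `∫₀^Δt sin θ(t) dt > Δt (1 - cos θ_q)/θ_q`. -/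
theorem rise_lower_bound
    (Δt θq : ℝ) (hΔt : 0 < Δt) (θ θ' θ'' : ℝ → ℝ)
    (hd1 : ∀ t ∈ Set.Icc 0 Δt, HasDerivWithinAt θ (θ' t) (Set.Icc 0 Δt) t)
    (hd2 : ∀ t ∈ Set.Icc 0 Δt, HasDerivWithinAt θ' (θ'' t) (Set.Icc 0 Δt) t)
    (hcont : ContinuousOn θ'' (Set.Icc 0 Δt))
    (hconc : ∀ t ∈ Set.Icc 0 Δt, θ'' t < 0)
    (h0 : θ 0 = 0) (hq : θ Δt = θq) (hθq : 0 < θq ∧ θq ≤ π / 2)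
    (hrange : ∀ t ∈ Set.Icc 0 Δt, θ t ∈ Set.Icc 0 θq) :
    (∫ t in (0 : ℝ)..Δt, Real.sin (θ t)) > Δt * (1 - Real.cos θq) / θq :=
  rise_lower_bound_general Δt θq hΔt θ θ' θ'' hd1 hd2 hconc h0 hq hθq hrange
end

section
/- Let n ≥ 3 be an integer, H a real constant, and let (x, y, θ) be a Delaunay generating curve on [t_p, t_q] (t_p < t_q) with constant force F > 0. Assume the curve is strictly rising, i.e. sin θ(t) > 0 for all t ∈ (t_p, t_q); that θ(t) ∈ [θ(t_p), θ(t_q)] for all t; that θ(t_p) ∈ [0, π/2); and that max{π/6, θ(t_p)} < θ(t_q) ≤ min{π/2, θ(t_p) + π/3}. Then x(t_q) − y(t_q)·cot(θ(t_q) − π/6) < x(t_p) − y(t_p)·cot(θ(t_p) + π/6); i.e., the x-axis intercept of the line through the right endpoint q = (x(t_q), y(t_q)) at angle θ(t_q) − π/6 above the horizontal lies strictly to the left of the x-axis intercept of the line through the left endpoint p = (x(t_p), y(t_p)) at angle θ(t_p) + π/6 above the horizontal. -/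
/-!
By the force identity, `cos θ = H y + F y^{-(n-2)}` is a strictly convex function of the height
`y`, and `y` increases along the rising curve. Hence `cos θ` lies strictly below its chord, which is
the profile `cos θ = L(y)` of the circular arc with the same endpoint heights and angles. The curve
is therefore steeper than that arc, so its horizontal run `x_q - x_p` is smaller than the arc's,
`(y_q - y_p) cot((θ_p + θ_q)/2)`. The angle hypotheses put `(θ_p + θ_q)/2` between
`θ_p + π/6` and `θ_q - π/6`, and monotonicity of `cot` on `(0, π)` finishes.
-/

open Real Set

lemma strictAntiOn_cot : StrictAntiOn cot (Ioo 0 π) := by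
  rintro u ⟨hu₀, huπ⟩ v ⟨hv₀, hvπ⟩ huv
  have hsin_sub : 0 < sin (v - u) := sin_pos_of_pos_of_lt_pi (by linarith) (by linarith)
  rw [sin_sub] at hsin_sub
  rw [cot_eq_cos_div_sin, cot_eq_cos_div_sin,
    div_lt_div_iff₀ (sin_pos_of_pos_of_lt_pi hv₀ hvπ) (sin_pos_of_pos_of_lt_pi hu₀ huπ)]
  linarith

lemma sin_sub_sin_div_cos_sub_cos {α β : ℝ} (h : sin ((α - β) / 2) ≠ 0) :
    (sin α - sin β) / (cos β - cos α) = cot ((α + β) / 2) := by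
  have hden : cos β - cos α = (2 * sin ((α - β) / 2)) * sin ((α + β) / 2) := by
    rw [cos_sub_cos, add_comm β α, ← neg_sub α β, neg_div, sin_neg]
    ring
  rw [hden, sin_sub_sin, mul_div_mul_left _ _ (mul_ne_zero two_ne_zero h), cot_eq_cos_div_sin]

lemma cos_mul_sqrt_one_sub_sq_lt {φ L : ℝ} (hcos : 0 ≤ cos φ) (hlt : cos φ < L)
    (hsin : 0 < sin φ) : cos φ * √(1 - L ^ 2) < L * sin φ := by
  have hsqrt : √(1 - L ^ 2) < sin φ := by
    rw [sqrt_lt' hsin]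
    nlinarith [sin_sq_add_cos_sq φ]
  calc cos φ * √(1 - L ^ 2) ≤ cos φ * sin φ := mul_le_mul_of_nonneg_left hsqrt.le hcos
    _ < L * sin φ := mul_lt_mul_of_pos_right hlt hsin

lemma HasDerivAt.add_sqrt_one_sub_sq_div {x g : ℝ → ℝ} {x' g' s t : ℝ} (hx : HasDerivAt x x' t)
    (hg : HasDerivAt g (s * g') t) (hg₁ : g t ^ 2 < 1) (hs : s ≠ 0) :
    HasDerivAt (fun u => x u + √(1 - g u ^ 2) / s) (x' - g t * g' / √(1 - g t ^ 2)) t := by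
  have hpos : 0 < 1 - g t ^ 2 := by linarith
  refine (hx.fun_add ((((hg.fun_pow 2).const_sub 1).sqrt hpos.ne').div_const s)).congr_deriv ?_
  field_simp
  ring

lemma StrictConvexOn.lt_add_secant_mul {f : ℝ → ℝ} {s : Set ℝ} (hf : StrictConvexOn ℝ s f)
    {a b u : ℝ} (ha : a ∈ s) (hb : b ∈ s) (hau : a < u) (hub : u < b) :
    f u < f a + (f b - f a) / (b - a) * (u - a) := by
  have := hf.secant_strict_mono_aux2 ha hb hau hub
  rw [div_lt_iff₀ (sub_pos.2 hau)] at this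
  linarith

lemma strictConvexOn_mul_add_mul_inv_pow {H F : ℝ} {k : ℕ} (hF : 0 < F) (hk : 1 ≤ k) :
    StrictConvexOn ℝ (Ioi 0) (fun u : ℝ => H * u + F * (u ^ k)⁻¹) := by
  have hpow : StrictConvexOn ℝ (Ioi 0) (fun u : ℝ => u ^ (-(k : ℤ))) :=
    strictConvexOn_zpow (by omega) (by omega)
  refine ⟨convex_Ioi 0, fun u hu v hv huv a b ha hb hab => ?_⟩
  have := hpow.2 hu hv huv ha hb hab
  simp only [smul_eq_mul, zpow_neg, zpow_natCast] at this ⊢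
  linear_combination F * this

lemma strictMonoOn_Icc_of_hasDerivWithinAt_pos {f f' : ℝ → ℝ} {a b : ℝ}
    (hf : ∀ t ∈ Icc a b, HasDerivWithinAt f (f' t) (Icc a b) t) (hpos : ∀ t ∈ Ioo a b, 0 < f' t) :
    StrictMonoOn f (Icc a b) :=
  strictMonoOn_of_hasDerivWithinAt_pos (convex_Icc a b) (fun t ht => (hf t ht).continuousWithinAt)
    (by simpa only [interior_Icc] using
      fun t ht => (hf t (Ioo_subset_Icc_self ht)).mono Ioo_subset_Icc_self)
    (by simpa only [interior_Icc] using hpos)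

theorem sub_lt_sin_sub_sin_div_of_cos_lt_chord {x y θ : ℝ → ℝ} {tp tq s : ℝ} (htpq : tp < tq)
    (hx : ∀ t ∈ Icc tp tq, HasDerivWithinAt x (cos (θ t)) (Icc tp tq) t)
    (hy : ∀ t ∈ Icc tp tq, HasDerivWithinAt y (sin (θ t)) (Icc tp tq) t)
    (hsin : ∀ t ∈ Ioo tp tq, 0 < sin (θ t)) (hcos : ∀ t ∈ Ioo tp tq, 0 ≤ cos (θ t))
    (hs : s < 0) (hchord : ∀ t ∈ Ioo tp tq, cos (θ t) < cos (θ tp) + s * (y t - y tp))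
    (hq : cos (θ tp) + s * (y tq - y tp) = cos (θ tq))
    (hsinp : 0 ≤ sin (θ tp)) (hsinq : 0 ≤ sin (θ tq)) :
    x tq - x tp < (sin (θ tp) - sin (θ tq)) / s := by
  set L : ℝ → ℝ := fun t => cos (θ tp) + s * (y t - y tp)
  have hymono := strictMonoOn_Icc_of_hasDerivWithinAt_pos hy hsin
  have hL₁ : ∀ t ∈ Ioo tp tq, L t ^ 2 < 1 := by
    intro t ht
    have hyt : y tp < y t := hymono (left_mem_Icc.2 htpq.le) (Ioo_subset_Icc_self ht) ht.1
    have : L t < 1 := by nlinarith [cos_le_one (θ tp)]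
    nlinarith [hcos t ht, hchord t ht]
  -- Up to a constant, `-√(1 - L t ^ 2) / s` is the abscissa at height `y t` of the circular arc
  -- of curvature `-s` with `cos θ = L`; `Φ` decreases because the curve is steeper than that arc.
  set Φ : ℝ → ℝ := fun t => x t + √(1 - L t ^ 2) / s
  have hΦ : StrictAntiOn Φ (Icc tp tq) := by
    have hxc : ContinuousOn x (Icc tp tq) := fun t ht => (hx t ht).continuousWithinAt
    have hyc : ContinuousOn y (Icc tp tq) := fun t ht => (hy t ht).continuousWithinAt
    refine strictAntiOn_of_hasDerivWithinAt_neg (convex_Icc tp tq) (by fun_prop)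
      (f' := fun t => cos (θ t) - L t * sin (θ t) / √(1 - L t ^ 2)) ?_ ?_ <;>
      simp only [interior_Icc] <;> intro t ht
    · have hnhds := Icc_mem_nhds ht.1 ht.2
      refine HasDerivAt.hasDerivWithinAt ?_
      exact ((hx t (Ioo_subset_Icc_self ht)).hasDerivAt hnhds).add_sqrt_one_sub_sq_div
        ((((hy t (Ioo_subset_Icc_self ht)).hasDerivAt hnhds).sub_const _).const_mul s
          |>.const_add _) (hL₁ t ht) hs.ne
    · rw [sub_neg, lt_div_iff₀ (sqrt_pos.2 (by linarith [hL₁ t ht]))]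
      exact cos_mul_sqrt_one_sub_sq_lt (hcos t ht) (hchord t ht) (hsin t ht)
  have hΦp : Φ tp = x tp + sin (θ tp) / s := by
    simp [Φ, L, ← abs_sin_eq_sqrt_one_sub_cos_sq, abs_of_nonneg hsinp]
  have hΦq : Φ tq = x tq + sin (θ tq) / s := by
    simp [Φ, L, hq, ← abs_sin_eq_sqrt_one_sub_cos_sq, abs_of_nonneg hsinq]
  have := hΦ (left_mem_Icc.2 htpq.le) (right_mem_Icc.2 htpq.le) htpq
  rw [hΦp, hΦq] at this
  rw [sub_div]
  linarith

lemma cos_lt_chord_of_force_eq {k : ℕ} (hk : 1 ≤ k) {H F tp tq : ℝ} {y θ : ℝ → ℝ}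
    (hypos : ∀ t ∈ Icc tp tq, 0 < y t)
    (hF : ∀ t ∈ Icc tp tq, y t ^ k * (cos (θ t) - H * y t) = F) (hFpos : 0 < F)
    (hymono : StrictMonoOn y (Icc tp tq)) (t : ℝ) (ht : t ∈ Ioo tp tq) :
    cos (θ t) < cos (θ tp) + (cos (θ tq) - cos (θ tp)) / (y tq - y tp) * (y t - y tp) := by
  have hcos : ∀ t ∈ Icc tp tq, cos (θ t) = H * y t + F * (y t ^ k)⁻¹ := by
    intro t ht
    rw [← hF t ht]
    field_simp [(pow_pos (hypos t ht) k).ne']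
    ring
  have hp := left_mem_Icc.2 (ht.1.trans ht.2).le
  have hq := right_mem_Icc.2 (ht.1.trans ht.2).le
  have htI := Ioo_subset_Icc_self ht
  rw [hcos t htI, hcos tp hp, hcos tq hq]
  exact (strictConvexOn_mul_add_mul_inv_pow hFpos hk).lt_add_secant_mul (hypos tp hp)
    (hypos tq hq) (hymono hp htI ht.1) (hymono htI hq ht.2)

theorem unduloid_corollary_general
    (n : ℕ) (hn : 3 ≤ n) (H F : ℝ) (tp tq : ℝ) (htpq : tp < tq)
    (x y θ : ℝ → ℝ)
    (hypos : ∀ t ∈ Set.Icc tp tq, 0 < y t)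
    (hx : ∀ t ∈ Set.Icc tp tq,
      HasDerivWithinAt x (Real.cos (θ t)) (Set.Icc tp tq) t)
    (hy : ∀ t ∈ Set.Icc tp tq,
      HasDerivWithinAt y (Real.sin (θ t)) (Set.Icc tp tq) t)
    (hF : ∀ t ∈ Set.Icc tp tq,
      y t ^ (n - 2) * (Real.cos (θ t) - H * y t) = F)
    (hFpos : 0 < F)
    (hrising : ∀ t ∈ Set.Ioo tp tq, 0 < Real.sin (θ t))
    (hrange : ∀ t ∈ Set.Icc tp tq, θ t ∈ Set.Icc (θ tp) (θ tq))
    (hθp : θ tp ∈ Set.Ico 0 (π / 2))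
    (hθq1 : max (π / 6) (θ tp) < θ tq)
    (hθq2 : θ tq ≤ min (π / 2) (θ tp + π / 3)) :
    x tq - y tq * Real.cot (θ tq - π / 6)
      < x tp - y tp * Real.cot (θ tp + π / 6) := by
  obtain ⟨hθq_gt, hθpq⟩ := max_lt_iff.1 hθq1
  obtain ⟨hθq_le, hθq_le'⟩ := le_min_iff.1 hθq2
  have hπ := pi_pos
  have hp := left_mem_Icc.2 htpq.le
  have hq := right_mem_Icc.2 htpq.le
  have hymono := strictMonoOn_Icc_of_hasDerivWithinAt_pos hy hrising
  have hcos : ∀ t ∈ Ioo tp tq, 0 ≤ cos (θ t) := fun t ht =>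
    cos_nonneg_of_mem_Icc ⟨by linarith [hθp.1, (hrange t (Ioo_subset_Icc_self ht)).1],
      by linarith [(hrange t (Ioo_subset_Icc_self ht)).2]⟩
  have hs : (cos (θ tq) - cos (θ tp)) / (y tq - y tp) < 0 :=
    div_neg_of_neg_of_pos (sub_neg.2 (cos_lt_cos_of_nonneg_of_le_pi hθp.1 (by linarith) hθpq))
      (sub_pos.2 (hymono hp hq htpq))
  have hcircle := sub_lt_sin_sub_sin_div_of_cos_lt_chord htpq hx hy hrising hcos hs
    (cos_lt_chord_of_force_eq (by omega) hypos hF hFpos hymono)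
    (by field_simp [(sub_pos.2 (hymono hp hq htpq)).ne']; ring)
    (sin_nonneg_of_nonneg_of_le_pi hθp.1 (by linarith))
    (sin_nonneg_of_nonneg_of_le_pi (by linarith [hθp.1]) (by linarith))
  rw [div_div_eq_mul_div, mul_comm, mul_div_assoc, sin_sub_sin_div_cos_sub_cos
    (sin_neg_of_neg_of_neg_pi_lt (by linarith) (by linarith)).ne] at hcircle
  have hcot_q : cot ((θ tp + θ tq) / 2) ≤ cot (θ tq - π / 6) :=
    strictAntiOn_cot.antitoneOn ⟨by linarith, by linarith⟩ ⟨by linarith [hθp.1], by linarith⟩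
      (by linarith)
  have hcot_p : cot (θ tp + π / 6) ≤ cot ((θ tp + θ tq) / 2) :=
    strictAntiOn_cot.antitoneOn ⟨by linarith [hθp.1], by linarith⟩
      ⟨by linarith [hθp.1], by linarith⟩ (by linarith)
  linarith [mul_le_mul_of_nonneg_left hcot_q (hypos tq hq).le,
    mul_le_mul_of_nonneg_left hcot_p (hypos tp hp).le]

/-- Let `(x, y, θ)` be a Delaunay generating curve on
`[t_p, t_q]` with constant force `F > 0`, strictly rising, with
`θ(t) ∈ [θ(t_p), θ(t_q)]`, `θ(t_p) ∈ [0, π/2)` and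
`max {π/6, θ(t_p)} < θ(t_q) ≤ min {π/2, θ(t_p) + π/3}`.  Then the x-axis
intercept of the line through the right endpoint `q` at angle `θ(t_q) - π/6`
above horizontal lies strictly to the left of that of the line through the
left endpoint `p` at angle `θ(t_p) + π/6` above horizontal:
`f₄(q) < f₂(p)`. -/
theorem unduloid_corollary
    (n : ℕ) (hn : 3 ≤ n) (H F : ℝ) (tp tq : ℝ) (htpq : tp < tq)
    (x y θ : ℝ → ℝ)
    (hypos : ∀ t ∈ Set.Icc tp tq, 0 < y t)
    (hx : ∀ t ∈ Set.Icc tp tq,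
      HasDerivWithinAt x (Real.cos (θ t)) (Set.Icc tp tq) t)
    (hy : ∀ t ∈ Set.Icc tp tq,
      HasDerivWithinAt y (Real.sin (θ t)) (Set.Icc tp tq) t)
    (hθ : ∀ t ∈ Set.Icc tp tq, HasDerivWithinAt θ
      (-((n : ℝ) - 1) * H + ((n : ℝ) - 2) * Real.cos (θ t) / y t)
      (Set.Icc tp tq) t)
    (hF : ∀ t ∈ Set.Icc tp tq,
      y t ^ (n - 2) * (Real.cos (θ t) - H * y t) = F)
    (hFpos : 0 < F)
    (hrising : ∀ t ∈ Set.Ioo tp tq, 0 < Real.sin (θ t))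
    (hrange : ∀ t ∈ Set.Icc tp tq, θ t ∈ Set.Icc (θ tp) (θ tq))
    (hθp : θ tp ∈ Set.Ico 0 (π / 2))
    (hθq1 : max (π / 6) (θ tp) < θ tq)
    (hθq2 : θ tq ≤ min (π / 2) (θ tp + π / 3)) :
    x tq - y tq * Real.cot (θ tq - π / 6)
      < x tp - y tp * Real.cot (θ tp + π / 6) :=
  unduloid_corollary_general n hn H F tp tq htpq x y θ hypos hx hy hF hFpos hrising hrange hθp hθq1
    hθq2
end
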